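/- arXiv:2005.04556 — 2 statements merged into one kernel-verified Lean document; each statement's English description precedes it below -/
import Mathlib

section
/- Every hypergraph H = (V,F) admits a minimum-width tree decomposition (T,(B_t)) of its 2-section [H]₂ together with an assignment b : F → T such that all vertices of f lie in the bag B_{b(f)} for each hyperedge f, and for each vertex v, the set of nodes whose bags contain v equals the vertex set of the subtree of T induced by the union of the paths in T between b(f_i) and b(f_j) over all pairs of hyperedges f_i, f_j containing v. -/
open Finset

/-- A simple, loopless hypergraph: hyperedges have at least 2 vertices, no hyperedge
contains another, and every vertex lies in some hyperedge. -/
structure Hypergraph' (V : Type) [Fintype V] [DecidableEq V] where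
  F : Finset (Finset V)
  no_loops : ∀ f ∈ F, 2 ≤ f.card
  simple : ∀ f ∈ F, ∀ g ∈ F, f ⊆ g → f = g
  cover : ∀ v : V, ∃ f ∈ F, v ∈ f

variable {V : Type} [Fintype V] [DecidableEq V]

/-- A hypergraph is linear if distinct hyperedges share at most one vertex. -/
def Hypergraph'.Linear (H : Hypergraph' V) : Prop :=
  ∀ f ∈ H.F, ∀ g ∈ H.F, f ≠ g → (f ∩ g).card ≤ 1

/-- The degree of a vertex: the number of hyperedges containing it. -/
def Hypergraph'.deg (H : Hypergraph' V) (v : V) : ℕ :=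
  (H.F.filter (fun f => v ∈ f)).card

/-- The 2-section of a hypergraph. -/
def Hypergraph'.twoSection (H : Hypergraph' V) : SimpleGraph V where
  Adj u v := u ≠ v ∧ ∃ f ∈ H.F, u ∈ f ∧ v ∈ f
  symm := ⟨by
    rintro u v ⟨h, f, hf, h1, h2⟩
    exact ⟨h.symm, f, hf, h2, h1⟩⟩
  loopless := ⟨fun v h => h.1 rfl⟩

/-- The rank: the maximum size of a hyperedge. -/
def Hypergraph'.rank (H : Hypergraph' V) : ℕ := H.F.sup Finset.card

/-- The anti-rank: the minimum size of a hyperedge. -/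
noncomputable def Hypergraph'.antiRank (H : Hypergraph' V) : ℕ :=
  sInf (Finset.card '' (H.F : Set (Finset V)))

/-- The minimum degree. -/
noncomputable def Hypergraph'.minDegree (H : Hypergraph' V) : ℕ :=
  sInf (Set.range H.deg)

/-- The maximum degree. -/
def Hypergraph'.maxDegree (H : Hypergraph' V) : ℕ :=
  Finset.univ.sup H.deg

/-- The average rank: the average size of a hyperedge. -/
noncomputable def Hypergraph'.avgRank (H : Hypergraph' V) : ℝ :=
  (∑ f ∈ H.F, (f.card : ℝ)) / H.F.card

/-- A tree decomposition of a graph. -/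
structure TreeDecomp {W : Type} (G : SimpleGraph W) where
  τ : Type
  finT : Fintype τ
  tree : SimpleGraph τ
  conn : tree.Connected
  acyc : tree.IsAcyclic
  bags : τ → Finset W
  /-- (T1): the bags containing a vertex form a nonempty connected subtree. -/
  bags_conn : ∀ v : W, (tree.induce {t | v ∈ bags t}).Connected
  /-- (T2): every edge is contained in some bag. -/
  bags_edge : ∀ u v : W, G.Adj u v → ∃ t, u ∈ bags t ∧ v ∈ bags t

/-- The width of a tree decomposition: max bag size minus one. -/
noncomputable def TreeDecomp.width {W : Type} {G : SimpleGraph W} (d : TreeDecomp G) : ℕ :=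
  letI := d.finT
  (Finset.univ.sup fun t => (d.bags t).card) - 1

/-- The treewidth of a graph. -/
noncomputable def treewidth {W : Type} (G : SimpleGraph W) : ℕ :=
  sInf {n | ∃ d : TreeDecomp G, d.width = n}

/-- A supertree decomposition of a hypergraph. -/
structure SupertreeDecomp (H : Hypergraph' V) extends TreeDecomp H.twoSection where
  lam : τ → Finset (Finset V)
  lam_sub : ∀ t, lam t ⊆ H.F
  /-- (TII): every bag is covered by its hyperedges. -/
  bag_cover : ∀ t, ∀ v ∈ bags t, ∃ f ∈ lam t, v ∈ f
  /-- (TIII): the nodes containing a hyperedge form a nonempty connected subtree. -/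
  lam_conn : ∀ f ∈ H.F, (tree.induce {t | f ∈ lam t}).Connected
  /-- (TIV): intersecting hyperedges appear together in some bag. -/
  lam_meet : ∀ f ∈ H.F, ∀ g ∈ H.F, (f ∩ g).Nonempty → ∃ t, f ∈ lam t ∧ g ∈ lam t

/-- The width of a supertree decomposition: max number of hyperedges in a bag. -/
noncomputable def SupertreeDecomp.width {H : Hypergraph' V} (d : SupertreeDecomp H) : ℕ :=
  letI := d.finT
  Finset.univ.sup fun t => (d.lam t).card

/-- The supertree width of a hypergraph. -/
noncomputable def stw (H : Hypergraph' V) : ℕ :=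
  sInf {n | ∃ d : SupertreeDecomp H, d.width = n}

/-- The line graph of a hypergraph. -/
def Hypergraph'.lineGraph (H : Hypergraph' V) : SimpleGraph {f // f ∈ H.F} where
  Adj f g := f ≠ g ∧ ((f : Finset V) ∩ (g : Finset V)).Nonempty
  symm := ⟨by
    rintro f g ⟨h, hfg⟩
    exact ⟨h.symm, by rwa [Finset.inter_comm]⟩⟩
  loopless := ⟨fun f h => h.1 rfl⟩

/-- A hypergraph is 2-regular if every vertex has degree exactly 2. -/
def Hypergraph'.TwoRegular (H : Hypergraph' V) : Prop := ∀ v : V, H.deg v = 2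

/-- For a 2-regular linear hypergraph, the dual is a simple graph on the hyperedges:
two hyperedges are adjacent iff some vertex lies in both. -/
def Hypergraph'.dualGraph (H : Hypergraph' V) : SimpleGraph {f // f ∈ H.F} where
  Adj f g := f ≠ g ∧ ∃ v : V, v ∈ (f : Finset V) ∧ v ∈ (g : Finset V)
  symm := ⟨by
    rintro f g ⟨h, v, h1, h2⟩
    exact ⟨h.symm, v, h2, h1⟩⟩
  loopless := ⟨fun f h => h.1 rfl⟩

/-! The bags containing a vertex form a subtree of the decomposition tree, and subtrees of a tree
have the Helly property (three of them meet at the median of three witnesses of pairwise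
intersection), so the clique spanned by a hyperedge `f` lies in a single bag; call its node the
base `b f`. Now shrink each bag `B_t` to the vertices `v` such that `t` lies on the path between
the bases of two hyperedges through `v`. For fixed `v` these nodes form a subtree (each such path
is joined to the base of one fixed hyperedge at `v` by another one), they contain the base of
every hyperedge at `v`, so every edge of `[H]₂` is still covered, and they lie in the old subtree
of `v`, so no bag grows. Shrinking a minimum-width decomposition therefore keeps its width
minimum. -/

namespace SimpleGraph

variable {α : Type*} {G : SimpleGraph α}

def IsPathClosed (G : SimpleGraph α) (s : Set α) : Prop :=
  ∀ ⦃x y : α⦄, x ∈ s → y ∈ s → ∀ p : G.Walk x y, p.IsPath → ∀ t ∈ p.support, t ∈ s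

theorem IsPathClosed.inter {s s' : Set α} (hs : G.IsPathClosed s) (hs' : G.IsPathClosed s') :
    G.IsPathClosed (s ∩ s') :=
  fun _ _ hx hy p hp t ht => ⟨hs hx.1 hy.1 p hp t ht, hs' hx.2 hy.2 p hp t ht⟩

theorem IsAcyclic.isPathClosed_of_preconnected_induce (hG : G.IsAcyclic) {s : Set α}
    (hs : (G.induce s).Preconnected) : G.IsPathClosed s := by
  classical
  intro x y hx hy p hp t ht
  obtain ⟨w⟩ := hs ⟨x, hx⟩ ⟨y, hy⟩
  let q := w.map (Embedding.induce s).toHom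
  have hq : p = q.bypass := congrArg Subtype.val <|
    (hG.subsingleton_path x y).elim ⟨p, hp⟩ ⟨q.bypass, q.bypass_isPath⟩
  rw [hq] at ht
  obtain ⟨⟨t, hts⟩, -, rfl⟩ :=
    List.mem_map.1 <| Walk.support_map _ w ▸ q.support_bypass_subset_support ht
  exact hts

theorem Walk.IsPath.append_of_support_inter {u v w : α} {p : G.Walk u v} {q : G.Walk v w}
    (hp : p.IsPath) (hq : q.IsPath) (hpq : ∀ x ∈ p.support, x ∈ q.support → x = v) :
    (p.append q).IsPath := by
  have hq' : (v :: q.support.tail).Nodup := q.cons_tail_support ▸ hq.support_nodup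
  rw [Walk.isPath_def, Walk.support_append]
  refine hp.support_nodup.append (List.nodup_cons.1 hq').2 fun x hx hx' => ?_
  obtain rfl := hpq x hx (List.mem_of_mem_tail hx')
  exact (List.nodup_cons.1 hq').1 hx'

theorem Walk.exists_eq_append_at_first (P : α → Prop) {u v : α}
    (p : G.Walk u v) (hv : P v) :
    ∃ (m : α) (q : G.Walk u m) (r : G.Walk m v),
      p = q.append r ∧ P m ∧ ∀ x ∈ q.support, P x → x = m := by
  induction p with
  | nil => exact ⟨_, .nil, .nil, rfl, hv, by simp⟩
  | @cons a _ _ h p ih =>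
    by_cases ha : P a
    · exact ⟨a, .nil, .cons h p, rfl, ha, by simp⟩
    obtain ⟨m, q, r, rfl, hm, hfirst⟩ := ih hv
    refine ⟨m, .cons h q, r, rfl, hm, ?_⟩
    rintro x hx hPx
    rcases List.mem_cons.1 (Walk.support_cons h q ▸ hx) with rfl | hx
    exacts [absurd hPx ha, hfirst x hx hPx]

/-- The first vertex `m` of `pab` lying on `pcb` is a median: `a → m` followed by `m → c` along
`pcb` is a path, hence it is `pac`. -/
theorem IsAcyclic.exists_mem_support_of_isPath (hG : G.IsAcyclic) {a b c : α}
    {pab : G.Walk a b} {pac : G.Walk a c} {pcb : G.Walk c b}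
    (hab : pab.IsPath) (hac : pac.IsPath) (hcb : pcb.IsPath) :
    ∃ m, m ∈ pab.support ∧ m ∈ pac.support ∧ m ∈ pcb.support := by
  classical
  obtain ⟨m, q, r, rfl, hm, hfirst⟩ :=
    Walk.exists_eq_append_at_first (· ∈ pcb.support) pab pcb.end_mem_support
  have hmq : m ∈ q.support := q.end_mem_support
  let s := (pcb.takeUntil m hm).reverse
  have hs : s.IsPath := (hcb.takeUntil hm).reverse
  have hqs : (q.append s).IsPath := hab.of_append_left.append_of_support_inter hs
    fun x hx hxs => hfirst x hx <| pcb.support_takeUntil_subset_support hm <| by simpa [s] using hxs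
  have hpac : pac = q.append s := congrArg Subtype.val <|
    (hG.subsingleton_path a c).elim ⟨pac, hac⟩ ⟨_, hqs⟩
  refine ⟨m, ?_, ?_, hm⟩ <;> simp [hpac, Walk.mem_support_append_iff, hmq]

theorem Connected.exists_mem_inter_of_isPathClosed (hG : G.Connected) (hG' : G.IsAcyclic)
    {X Y Z : Set α} (hX : G.IsPathClosed X) (hY : G.IsPathClosed Y) (hZ : G.IsPathClosed Z)
    (hXY : (X ∩ Y).Nonempty) (hXZ : (X ∩ Z).Nonempty) (hYZ : (Y ∩ Z).Nonempty) :
    (X ∩ Y ∩ Z).Nonempty := by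
  classical
  obtain ⟨c, hcX, hcY⟩ := hXY
  obtain ⟨b, hbX, hbZ⟩ := hXZ
  obtain ⟨a, haY, haZ⟩ := hYZ
  obtain ⟨pab, hab⟩ := hG.exists_isPath a b
  obtain ⟨pac, hac⟩ := hG.exists_isPath a c
  obtain ⟨pcb, hcb⟩ := hG.exists_isPath c b
  obtain ⟨m, hmab, hmac, hmcb⟩ := hG'.exists_mem_support_of_isPath hab hac hcb
  exact ⟨m, ⟨hX hcX hbX pcb hcb m hmcb, hY haY hcY pac hac m hmac⟩, hZ haZ hbZ pab hab m hmab⟩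

theorem Connected.exists_forall_mem_of_isPathClosed (hG : G.Connected) (hG' : G.IsAcyclic)
    {ι : Type*} (s : Finset ι) (S : ι → Set α) (hS : ∀ i ∈ s, G.IsPathClosed (S i))
    (hpair : ∀ i ∈ s, ∀ j ∈ s, (S i ∩ S j).Nonempty) : ∃ t, ∀ i ∈ s, t ∈ S i := by
  classical
  induction s using Finset.induction_on generalizing S with
  | empty => exact ⟨hG.nonempty.some, by simp⟩
  | @insert a s _ ih =>
    simp only [Finset.forall_mem_insert] at hS hpair ⊢
    rcases s.eq_empty_or_nonempty with rfl | ⟨i₀, hi₀⟩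
    · obtain ⟨t, ht, -⟩ := hpair.1.1
      exact ⟨t, ht, by simp⟩
    -- the three-set case keeps the family `S i ∩ S a` pairwise intersecting
    obtain ⟨t, ht⟩ := ih (fun i => S i ∩ S a) (fun i hi => (hS.2 i hi).inter hS.1)
      fun i hi j hj =>
        (hG.exists_mem_inter_of_isPathClosed hG' (hS.2 i hi) (hS.2 j hj) hS.1
          ((hpair.2 i hi).2 j hj) (hpair.2 i hi).1 (hpair.2 j hj).1).mono
          fun _ h => ⟨⟨h.1.1, h.2⟩, h.1.2, h.2⟩
    exact ⟨t, (ht i₀ hi₀).2, fun i hi => (ht i hi).1⟩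

end SimpleGraph

namespace TreeDecomp

variable {W : Type} {G : SimpleGraph W}

theorem isPathClosed_bags (d : TreeDecomp G) (v : W) :
    d.tree.IsPathClosed {t | v ∈ d.bags t} :=
  d.acyc.isPathClosed_of_preconnected_induce (d.bags_conn v).preconnected

theorem exists_bag_superset_of_isClique (d : TreeDecomp G) {K : Finset W}
    (hK : G.IsClique (K : Set W)) : ∃ t, K ⊆ d.bags t :=
  d.conn.exists_forall_mem_of_isPathClosed d.acyc K _ (fun v _ => d.isPathClosed_bags v)
    fun u hu w hw => by
      rcases eq_or_ne u w with rfl | huw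
      · obtain ⟨⟨t, ht⟩⟩ := (d.bags_conn u).nonempty
        exact ⟨t, ht, ht⟩
      · exact d.bags_edge u w (hK hu hw huw)

def withBags (d : TreeDecomp G) (B : d.τ → Finset W)
    (hconn : ∀ v, (d.tree.induce {t | v ∈ B t}).Connected)
    (hedge : ∀ u v, G.Adj u v → ∃ t, u ∈ B t ∧ v ∈ B t) : TreeDecomp G :=
  { d with bags := B, bags_conn := hconn, bags_edge := hedge }

theorem width_withBags_le (d : TreeDecomp G) {B : d.τ → Finset W} {hconn hedge}
    (hB : ∀ t, B t ⊆ d.bags t) : (d.withBags B hconn hedge).width ≤ d.width :=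
  letI := d.finT
  Nat.sub_le_sub_right (Finset.sup_mono_fun fun t _ => Finset.card_le_card (hB t)) 1

def singleBag [Fintype W] (G : SimpleGraph W) : TreeDecomp G where
  τ := Unit
  finT := inferInstance
  tree := ⊥
  conn := SimpleGraph.connected_bot_iff.2 ⟨inferInstance, inferInstance⟩
  acyc := SimpleGraph.isAcyclic_bot
  bags _ := Finset.univ
  bags_conn _ := { preconnected := .of_subsingleton, nonempty := ⟨⟨(), Finset.mem_univ _⟩⟩ }
  bags_edge _ _ _ := ⟨(), Finset.mem_univ _, Finset.mem_univ _⟩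

theorem exists_width_eq_treewidth [Fintype W] (G : SimpleGraph W) :
    ∃ d : TreeDecomp G, d.width = treewidth G :=
  Nat.sInf_mem (s := {n | ∃ d : TreeDecomp G, d.width = n}) ⟨_, singleBag G, rfl⟩

end TreeDecomp

namespace Hypergraph'

open SimpleGraph

theorem isClique_twoSection (H : Hypergraph' V) {f : Finset V} (hf : f ∈ H.F) :
    H.twoSection.IsClique (f : Set V) :=
  fun _ hu _ hw huw => ⟨huw, f, hf, hu, hw⟩

variable (H : Hypergraph' V) (d : TreeDecomp H.twoSection) (b : {f // f ∈ H.F} → d.τ)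

open Classical in
noncomputable def baseBags (t : d.τ) : Finset V :=
  Finset.univ.filter fun v => ∃ f g : {f // f ∈ H.F}, v ∈ (f : Finset V) ∧ v ∈ (g : Finset V) ∧
    ∃ p : d.tree.Walk (b f) (b g), p.IsPath ∧ t ∈ p.support

variable {H d b}

theorem mem_baseBags {v : V} {t : d.τ} :
    v ∈ H.baseBags d b t ↔ ∃ f g : {f // f ∈ H.F}, v ∈ (f : Finset V) ∧ v ∈ (g : Finset V) ∧
      ∃ p : d.tree.Walk (b f) (b g), p.IsPath ∧ t ∈ p.support := by
  simp [baseBags]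

theorem mem_baseBags_of_isPath {v : V} {f g : {f // f ∈ H.F}} (hf : v ∈ (f : Finset V))
    (hg : v ∈ (g : Finset V)) {p : d.tree.Walk (b f) (b g)} (hp : p.IsPath) {t : d.τ}
    (ht : t ∈ p.support) : v ∈ H.baseBags d b t :=
  mem_baseBags.2 ⟨f, g, hf, hg, p, hp, ht⟩

theorem subset_baseBags (f : {f // f ∈ H.F}) : (f : Finset V) ⊆ H.baseBags d b (b f) :=
  fun _ hv => mem_baseBags_of_isPath hv hv .nil (Walk.start_mem_support _)

theorem baseBags_subset (hb : ∀ f : {f // f ∈ H.F}, (f : Finset V) ⊆ d.bags (b f)) (t : d.τ) :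
    H.baseBags d b t ⊆ d.bags t := fun v hv => by
  obtain ⟨f, g, hf, hg, p, hp, ht⟩ := mem_baseBags.1 hv
  exact d.isPathClosed_bags v (hb f hf) (hb g hg) p hp t ht

theorem connected_induce_baseBags (v : V) :
    (d.tree.induce {t | v ∈ H.baseBags d b t}).Connected := by
  classical
  obtain ⟨f₀, hf₀, hv₀⟩ := H.cover v
  rw [SimpleGraph.connected_iff_exists_forall_reachable]
  refine ⟨⟨b ⟨f₀, hf₀⟩, subset_baseBags _ hv₀⟩, ?_⟩
  rintro ⟨t, ht⟩
  obtain ⟨f, g, hf, hg, p, hp, htp⟩ := mem_baseBags.1 ht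
  obtain ⟨q, hq⟩ := d.conn.exists_isPath (b ⟨f₀, hf₀⟩) (b f)
  have hw : ∀ s ∈ (q.append (p.takeUntil t htp)).support, v ∈ H.baseBags d b s := by
    intro s hs
    rcases (Walk.mem_support_append_iff _ _).1 hs with hs | hs
    · exact mem_baseBags_of_isPath hv₀ hf hq hs
    · exact mem_baseBags_of_isPath hf hg hp (p.support_takeUntil_subset_support htp hs)
  exact (Walk.induce _ _ hw).reachable

noncomputable def baseDecomp : TreeDecomp H.twoSection :=
  d.withBags (H.baseBags d b) connected_induce_baseBags
    fun _ _ ⟨_, f, hf, hu, hv⟩ => ⟨b ⟨f, hf⟩, subset_baseBags _ hu, subset_baseBags _ hv⟩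

end Hypergraph'

/-- there is a minimum-width tree decomposition of `[H]₂` with an assignment
`b` of base nodes to hyperedges such that each hyperedge lies in the bag of its base node,
and the nodes whose bags contain a vertex `v` are exactly the nodes lying on the (unique)
paths between base nodes of hyperedges containing `v`. -/
theorem exists_min_treeDecomp_with_base (H : Hypergraph' V) :
    ∃ d : TreeDecomp H.twoSection, d.width = treewidth H.twoSection ∧
      ∃ b : {f // f ∈ H.F} → d.τ,
        (∀ f : {f // f ∈ H.F}, (f : Finset V) ⊆ d.bags (b f)) ∧
        (∀ v : V, ∀ t : d.τ, v ∈ d.bags t ↔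
          ∃ f g : {f // f ∈ H.F}, v ∈ (f : Finset V) ∧ v ∈ (g : Finset V) ∧
            ∃ p : d.tree.Walk (b f) (b g), p.IsPath ∧ t ∈ p.support) := by
  obtain ⟨d, hd⟩ := TreeDecomp.exists_width_eq_treewidth H.twoSection
  choose b hb using fun f : {f // f ∈ H.F} =>
    d.exists_bag_superset_of_isClique (H.isClique_twoSection f.2)
  refine ⟨Hypergraph'.baseDecomp (b := b), le_antisymm ?_ (Nat.sInf_le ⟨_, rfl⟩), b,
    Hypergraph'.subset_baseBags, fun _ _ => Hypergraph'.mem_baseBags⟩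
  exact hd ▸ d.width_withBags_le (Hypergraph'.baseBags_subset hb)
end

section
/- Let Δ ≥ δ ≥ 2 be integers and 0 < s ≤ 1/2 a real with Δ ≤ 2δ² − 2δ. Define f(α,β) = α/Δ + β/Δ + (1/(δ(δ−1)))·(−α² + sα − β² + sβ). Then for all reals α, β with s ≤ α ≤ 1/2, s ≤ β ≤ 1/2, and α + β > 1/2, one has f(α,β) ≥ min{ f(1/2, s), f(1/2 − s, s) }. -/
open Finset

variable {V : Type} [Fintype V] [DecidableEq V]

/-!
Write `f α β = g α + g β` with the concave parabola `g x = P x - c x²`, where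
`c = 1 / (δ (δ - 1))` and `P = 1 / Δ + c s`. The condition `Δ ≤ 2 δ² - 2 δ` says `c / 2 ≤ 1 / Δ`,
which gives `g s ≤ g (1/2)`. A concave function on an interval is at least the smaller of its
endpoint values; when `α + β > 1/2` is slack this bounds `g α` and `g β` separately by values at
`s`, `1/2 - s` and `1/2`. Otherwise `α < 1/2 - s`, and `β` may be pushed down to `1/2 - α`: on the
line `α + β = 1/2` the function `α ↦ g α + g (1/2 - α)` is a concave parabola symmetric about `1/4`,
so it is smallest at the end points `α = s` and `α = 1/2 - s`.
-/

section Parabola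

variable (p q : ℝ)

def parabola (x : ℝ) : ℝ := p * x - q * x ^ 2

variable {p q}

theorem concaveOn_parabola (hq : 0 ≤ q) : ConcaveOn ℝ Set.univ (parabola p q) :=
  ((LinearMap.mul ℝ ℝ p).concaveOn convex_univ).sub (even_two.convexOn_pow.smul hq)

theorem min_parabola_le_of_mem_Icc (hq : 0 ≤ q) {a b x : ℝ} (hx : x ∈ Set.Icc a b) :
    min (parabola p q a) (parabola p q b) ≤ parabola p q x :=
  (concaveOn_parabola hq).min_le_of_mem_Icc trivial trivial hx

theorem parabola_le_parabola {a b : ℝ} (hab : a ≤ b) (h : q * (a + b) ≤ p) :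
    parabola p q a ≤ parabola p q b := by
  have key : parabola p q b - parabola p q a = (b - a) * (p - q * (a + b)) := by
    unfold parabola; ring
  nlinarith [mul_nonneg (sub_nonneg.2 hab) (sub_nonneg.2 h)]

theorem parabola_add_parabola_sub_le (hq : 0 ≤ q) {a t x : ℝ} (hax : a ≤ x) (hxt : x ≤ t - a) :
    parabola p q a + parabola p q (t - a) ≤ parabola p q x + parabola p q (t - x) := by
  have key : parabola p q x + parabola p q (t - x) - (parabola p q a + parabola p q (t - a)) =
      2 * q * (x - a) * (t - a - x) := by
    unfold parabola; ring
  nlinarith [mul_nonneg (mul_nonneg hq (sub_nonneg.2 hax)) (by linarith : 0 ≤ t - a - x)]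

theorem min_parabola_add_le (hq : 0 ≤ q) {s t α β : ℝ} (hst : parabola p q s ≤ parabola p q t)
    (hsα : s ≤ α) (hαt : α ≤ t) (hsβ : s ≤ β) (hβt : β ≤ t) (hαβ : t < α + β) :
    min (parabola p q t + parabola p q s) (parabola p q (t - s) + parabola p q s) ≤
      parabola p q α + parabola p q β := by
  have hα_ge : parabola p q s ≤ parabola p q α := by
    simpa only [min_eq_left hst] using min_parabola_le_of_mem_Icc hq (p := p) ⟨hsα, hαt⟩
  have hβ_ge : parabola p q s ≤ parabola p q β := by
    simpa only [min_eq_left hst] using min_parabola_le_of_mem_Icc hq (p := p) ⟨hsβ, hβt⟩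
  rcases le_or_gt (t - s) α with hα | hα
  · have hα_min := min_parabola_le_of_mem_Icc hq (p := p) ⟨hα, hαt⟩
    rw [min_add_add_right, min_comm]
    linarith
  · rcases min_le_iff.1 (min_parabola_le_of_mem_Icc hq (p := p) (a := t - α) ⟨by linarith, hβt⟩)
      with hβ_min | hβ_min
    · have hline := parabola_add_parabola_sub_le hq (p := p) hsα hα.le
      exact min_le_of_right_le (by linarith)
    · exact min_le_of_left_le (by linarith)

end Parabola

theorem appendixA_min_general (δ Δ : ℕ) (h2 : 2 ≤ δ) (hδΔ : δ ≤ Δ)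
    (s : ℝ)
    (hcond : (Δ : ℝ) ≤ 2 * (δ : ℝ) ^ 2 - 2 * δ)
    (f : ℝ → ℝ → ℝ)
    (hf : ∀ α β : ℝ, f α β =
      α / (Δ : ℝ) + β / (Δ : ℝ)
        + (1 / ((δ : ℝ) * ((δ : ℝ) - 1))) * (-α ^ 2 + s * α - β ^ 2 + s * β)) :
    ∀ α β : ℝ, s ≤ α → α ≤ 1 / 2 → s ≤ β → β ≤ 1 / 2 → 1 / 2 < α + β →
      min (f (1 / 2) s) (f (1 / 2 - s) s) ≤ f α β := by
  intro α β hsα hα hsβ hβ hαβ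
  have hδ : (2 : ℝ) ≤ δ := by exact_mod_cast h2
  have hΔ : (0 : ℝ) < Δ := by exact_mod_cast (by omega : 0 < Δ)
  set c : ℝ := 1 / ((δ : ℝ) * ((δ : ℝ) - 1)) with hc
  have hc0 : 0 ≤ c := by
    have : (0 : ℝ) < δ * (δ - 1) := by nlinarith
    positivity
  have hcΔ : c / 2 ≤ 1 / Δ := by
    rw [hc, div_div]; exact one_div_le_one_div_of_le hΔ (by linarith)
  have hfg : ∀ x y, f x y = parabola (1 / Δ + c * s) c x + parabola (1 / Δ + c * s) c y := by
    intro x y; rw [hf]; unfold parabola; ring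
  have hmono : parabola (1 / Δ + c * s) c s ≤ parabola (1 / Δ + c * s) c (1 / 2) :=
    parabola_le_parabola (by linarith) (by linarith)
  simp only [hfg]
  exact min_parabola_add_le hc0 hmono hsα hα hsβ hβ hαβ

/-- Appendix A: the optimization fact used in the proof of Theorem 1.1. -/
theorem appendixA_min (δ Δ : ℕ) (h2 : 2 ≤ δ) (hδΔ : δ ≤ Δ)
    (s : ℝ) (hs0 : 0 < s) (hs : s ≤ 1 / 2)
    (hcond : (Δ : ℝ) ≤ 2 * (δ : ℝ) ^ 2 - 2 * δ)
    (f : ℝ → ℝ → ℝ)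
    (hf : ∀ α β : ℝ, f α β =
      α / (Δ : ℝ) + β / (Δ : ℝ)
        + (1 / ((δ : ℝ) * ((δ : ℝ) - 1))) * (-α ^ 2 + s * α - β ^ 2 + s * β)) :
    ∀ α β : ℝ, s ≤ α → α ≤ 1 / 2 → s ≤ β → β ≤ 1 / 2 → 1 / 2 < α + β →
      min (f (1 / 2) s) (f (1 / 2 - s) s) ≤ f α β :=
  appendixA_min_general δ Δ h2 hδΔ s hcond f hf
end
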